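/- For every integer k ≥ 1, any word consisting of exactly k+1 occurrences of each number in {1, 2, ..., n^6+1} contains one of the following patterns: (0^{k+1}1^{k+1}...n^{k+1})^e for e ∈ {id, rev}, or (01...n)^{e1}(01...n)^{e2} for e1, e2 ∈ {id, rev}. -/

import Mathlib

/-!
For each value `v` of the word consider its span `[firstOcc v, lastOcc v]`; since `k ≥ 1`,
every span has two distinct ends. Erdős–Szekeres applied to the first occurrences of the
`n^6 + 1` values yields `n^3 + 1` values, monotone in value, whose first occurrences appear in
order. Erdős–Szekeres applied to their last occurrences yields either `n + 1` nested spans, or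
`n^2 + 1` spans ordered at both ends. Nested spans, and likewise `n + 1` consecutive ordered
spans sharing a point, put all first occurrences before all last ones: this is
`(01…n)^{e₁}(01…n)^{e₂}`. If no `n + 1` consecutive spans share a point, every `n`-th span lies
entirely to the left of the next one, and those `n + 1` values, each occurring `k + 1` times,
form `(0^{k+1}1^{k+1}…n^{k+1})^e`.
-/

/-- Standardisation of a word: replace the smallest value by 0, next smallest by 1, etc. -/
def stdz (w : List ℕ) : List ℕ := w.map (fun x => ((w.filter (· < x)).dedup).length)

/-- A word `w` contains the pattern `p` if some subword of `w` standardises to `p`. -/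
def Contains (w p : List ℕ) : Prop := ∃ u : List ℕ, u.Sublist w ∧ stdz u = p

/-- Number of repeats: indices having an earlier equal entry. -/
def repeats (w : List ℕ) : ℕ :=
  (Finset.univ.filter (fun i : Fin w.length =>
    ∃ j : Fin w.length, j < i ∧ w.get j = w.get i)).card

/-- Maximum value of a word. -/
def maxVal (w : List ℕ) : ℕ := w.foldr max 0

/-- Skew sum: entries of `u` shifted above those of `v`, with `u` first. -/
def skewSum (u v : List ℕ) : List ℕ := u.map (· + maxVal v) ++ v

/-- Direct sum: `u` first, entries of `v` shifted above those of `u`. -/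
def directSum (u v : List ℕ) : List ℕ := u ++ v.map (· + maxVal u)

/-- Iterated skew sum of `m` copies of `u`. -/
def skewPow (u : List ℕ) : ℕ → List ℕ
  | 0 => []
  | m + 1 => skewSum u (skewPow u m)

/-- Iterated direct sum of `m` copies of `u`. -/
def dirPow (u : List ℕ) : ℕ → List ℕ
  | 0 => []
  | m + 1 => directSum u (dirPow u m)

/-- The pattern 0^m 1^m ... n^m. -/
def repPat (m n : ℕ) : List ℕ := (List.range (n + 1)).flatMap (fun i => List.replicate m i)

/-- Position of the first occurrence of `v` in `w`. -/
def firstOcc (w : List ℕ) (v : ℕ) : ℕ := w.idxOf v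

/-- Position of the second occurrence of `v` in `w`. -/
def secondOcc (w : List ℕ) (v : ℕ) : ℕ :=
  w.idxOf v + 1 + (w.drop (w.idxOf v + 1)).idxOf v


theorem Finset.exists_orderEmbedding_of_le_card {N m : ℕ} {t : Finset (Fin N)} (h : m ≤ t.card) :
    ∃ g : Fin m ↪o Fin N, ∀ i, g i ∈ t := by
  obtain ⟨t', ht', hcard⟩ := exists_subset_card_eq h
  exact ⟨t'.orderEmbOfFin hcard, fun i => ht' (t'.orderEmbOfFin_mem hcard i)⟩

open Finset in
theorem erdos_szekeres {α : Type*} [LinearOrder α] {r s N : ℕ} {f : Fin N → α}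
    (hf : Function.Injective f) (hN : r * s < N) :
    (∃ g : Fin (r + 1) ↪o Fin N, StrictMono (f ∘ g)) ∨
      ∃ g : Fin (s + 1) ↪o Fin N, StrictAnti (f ∘ g) := by
  classical
  -- `len i` is the length of a longest increasing subsequence ending at `i`; it increases along
  -- increasing pairs, so each of its fibres is a decreasing subsequence.
  let chains (i : Fin N) : Finset (Finset (Fin N)) :=
    univ.filter fun t => i ∈ t ∧ (∀ j ∈ t, j ≤ i) ∧ StrictMonoOn f t
  let len (i : Fin N) : ℕ := (chains i).sup card
  have singleton_mem (i : Fin N) : {i} ∈ chains i := by simp [chains]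
  have exists_chain (i : Fin N) : ∃ t ∈ chains i, t.card = len i := by
    obtain ⟨t, ht, heq⟩ := exists_mem_eq_sup _ ⟨_, singleton_mem i⟩ card
    exact ⟨t, ht, heq.symm⟩
  have one_le_len (i : Fin N) : 1 ≤ len i := le_sup (f := card) (singleton_mem i)
  have len_lt {i j : Fin N} (hij : i < j) (hfij : f i < f j) : len i < len j := by
    obtain ⟨t, ht, hcard⟩ := exists_chain i
    simp only [chains, mem_filter, mem_univ, true_and] at ht
    obtain ⟨hit, hle, hmono⟩ := ht
    have hjt : j ∉ t := fun hj => (hle j hj).not_gt hij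
    have hmono' : StrictMonoOn f ↑(insert j t) := by
      rw [coe_insert, strictMonoOn_insert_iff_of_forall_le fun x hx => (hle x hx).trans hij.le]
      exact ⟨fun x hx _ => (hmono.monotoneOn hx hit (hle x hx)).trans_lt hfij, hmono⟩
    have hext : insert j t ∈ chains j := by
      simp only [chains, mem_filter, mem_univ, true_and, mem_insert, true_or, forall_eq_or_imp]
      exact ⟨⟨le_rfl, fun x hx => (hle x hx).trans hij.le⟩, hmono'⟩
    calc len i < (insert j t).card := by rw [card_insert_of_notMem hjt]; omega
      _ ≤ len j := le_sup (f := card) hext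
  by_cases hlong : ∃ i, r < len i
  · obtain ⟨i, hi⟩ := hlong
    obtain ⟨t, ht, hcard⟩ := exists_chain i
    obtain ⟨g, hg⟩ := exists_orderEmbedding_of_le_card (m := r + 1) (t := t) (by omega)
    refine Or.inl ⟨g, fun a b hab => ?_⟩
    exact (mem_filter.1 ht).2.2.2 (hg a) (hg b) (g.strictMono hab)
  · push Not at hlong
    obtain ⟨l, -, hl⟩ := exists_lt_card_fiber_of_mul_lt_card_of_maps_to (s := univ) (t := Icc 1 r)
      (f := len) (fun i _ => mem_Icc.2 ⟨one_le_len i, hlong i⟩) (by simpa using hN)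
    obtain ⟨g, hg⟩ := exists_orderEmbedding_of_le_card hl
    refine Or.inr ⟨g, fun a b hab => ?_⟩
    have hlen : len (g a) = len (g b) := by
      rw [(mem_filter.1 (hg a)).2, (mem_filter.1 (hg b)).2]
    refine lt_of_le_of_ne (not_lt.1 fun hlt => ?_) (hf.ne (g.injective.ne hab.ne'))
    exact (len_lt (g.strictMono hab) hlt).ne hlen

theorem erdos_szekeres_strictMono_comp {α : Type*} [LinearOrder α] {r s N : ℕ} {f : Fin N → α}
    (hf : Function.Injective f) (hN : r * s < N) :
    (∃ g : Fin (r + 1) → Fin N, StrictMono g ∧ StrictMono (f ∘ g)) ∨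
      ∃ g : Fin (s + 1) → Fin N, StrictAnti g ∧ StrictMono (f ∘ g) := by
  rcases erdos_szekeres hf hN with ⟨g, hg⟩ | ⟨g, hg⟩
  · exact Or.inl ⟨g, g.strictMono, hg⟩
  · exact Or.inr ⟨g ∘ Fin.rev, g.strictMono.comp_strictAnti Fin.rev_strictAnti,
      hg.comp Fin.rev_strictAnti⟩

namespace List

theorem ofFn_sublist_of_strictMono {α : Type*} {l : List α} {m : ℕ} {u : Fin m → α}
    (p : Fin m → ℕ) (hp : StrictMono p) (hu : ∀ i, l[p i]? = some (u i)) : ofFn u <+ l := by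
  have hlt (i : Fin m) : p i < l.length := (getElem?_eq_some_iff.1 (hu i)).1
  rw [sublist_iff_exists_fin_orderEmbedding_get_eq]
  refine ⟨OrderEmbedding.ofStrictMono (fun i => ⟨p (i.cast length_ofFn), hlt _⟩)
    fun i j hij => hp hij, fun i => ?_⟩
  have := hu (i.cast length_ofFn)
  rw [getElem?_eq_getElem (hlt _), Option.some_inj] at this
  simp only [get_eq_getElem, List.getElem_ofFn]
  exact this.symm

theorem ofFn_append_ofFn_sublist {α : Type*} {l : List α} {m m' : ℕ} {u : Fin m → α}
    {v : Fin m' → α} (p : Fin m → ℕ) (q : Fin m' → ℕ) (hp : StrictMono p) (hq : StrictMono q)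
    (hpq : ∀ i j, p i < q j) (hu : ∀ i, l[p i]? = some (u i)) (hv : ∀ j, l[q j]? = some (v j)) :
    ofFn u ++ ofFn v <+ l := by
  rcases Nat.eq_zero_or_pos m' with rfl | hm'
  · simpa using ofFn_sublist_of_strictMono p hp hu
  set c := q ⟨0, hm'⟩
  have hc (j : Fin m') : c ≤ q j := hq.monotone (Nat.zero_le (j : ℕ))
  rw [← take_append_drop c l]
  refine (ofFn_sublist_of_strictMono p hp fun i => ?_).append
    (ofFn_sublist_of_strictMono (fun j => q j - c) (fun i j hij => ?_) fun j => ?_)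
  · rw [getElem?_take_of_lt (hpq i _), hu]
  · have := hq hij; have := hc i; simp only; omega
  · rw [getElem?_drop, Nat.add_sub_cancel' (hc j), hv]

end List

theorem stdz_map_of_strictMono {t : ℕ} {v : Fin t → ℕ} (hv : StrictMono v) {l : List (Fin t)}
    (hl : ∀ j, j ∈ l) : stdz (l.map v) = l.map Fin.val := by
  simp only [stdz, List.map_map]
  refine List.map_congr_left fun j _ => ?_
  have hfilter : ((l.map v).filter (· < v j)).toFinset = (Finset.Iio j).image v := by
    ext x
    simp only [List.mem_toFinset, List.mem_filter, List.mem_map, decide_eq_true_eq,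
      Finset.mem_image, Finset.mem_Iio]
    constructor
    · rintro ⟨⟨i, -, rfl⟩, hi⟩
      exact ⟨i, hv.lt_iff_lt.1 hi, rfl⟩
    · rintro ⟨i, hi, rfl⟩
      exact ⟨⟨i, hl i, rfl⟩, hv hi⟩
  rw [Function.comp_apply, ← List.card_toFinset, hfilter,
    Finset.card_image_of_injective _ hv.injective, Fin.card_Iio]

theorem stdz_reverse (l : List ℕ) : stdz l.reverse = (stdz l).reverse := by
  simp only [stdz, List.map_reverse, ← List.card_toFinset, List.filter_reverse,
    List.toFinset_reverse]

theorem Contains.reverse {w p : List ℕ} (h : Contains w p) : Contains w.reverse p.reverse := by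
  obtain ⟨u, hu, rfl⟩ := h
  exact ⟨u.reverse, hu.reverse, stdz_reverse u⟩

def lastOcc (w : List ℕ) (v : ℕ) : ℕ := w.length - 1 - firstOcc w.reverse v

theorem firstOcc_le {w : List ℕ} {v i : ℕ} (h : w[i]? = some v) : firstOcc w v ≤ i := by
  obtain ⟨hi, rfl⟩ := List.getElem?_eq_some_iff.1 h
  by_contra! hlt
  simpa using List.not_of_lt_findIdx hlt

theorem getElem?_firstOcc {w : List ℕ} {v : ℕ} (h : v ∈ w) : w[firstOcc w v]? = some v :=
  List.getElem?_idxOf h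

theorem firstOcc_lt_length {w : List ℕ} {v : ℕ} (h : v ∈ w) : firstOcc w v < w.length :=
  List.idxOf_lt_length_of_mem h

theorem lastOcc_reverse (w : List ℕ) (v : ℕ) :
    lastOcc w.reverse v = w.length - 1 - firstOcc w v := by
  simp [lastOcc]

theorem firstOcc_reverse {w : List ℕ} {v : ℕ} (h : v ∈ w) :
    firstOcc w.reverse v = w.length - 1 - lastOcc w v := by
  have : firstOcc w.reverse v < w.length := by
    simpa using firstOcc_lt_length (List.mem_reverse.2 h)
  simp only [lastOcc]
  omega

theorem le_lastOcc {w : List ℕ} {v i : ℕ} (h : w[i]? = some v) : i ≤ lastOcc w v := by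
  have hi := (List.getElem?_eq_some_iff.1 h).1
  have hrev : w.reverse[w.length - 1 - i]? = some v := by
    rw [List.getElem?_reverse (by omega), ← h]
    congr 1
    omega
  have := firstOcc_le hrev
  simp only [lastOcc]
  omega

theorem getElem?_lastOcc {w : List ℕ} {v : ℕ} (h : v ∈ w) : w[lastOcc w v]? = some v := by
  have hrev := getElem?_firstOcc (List.mem_reverse.2 h)
  have hlt : firstOcc w.reverse v < w.length := by
    simpa using firstOcc_lt_length (List.mem_reverse.2 h)
  rw [List.getElem?_reverse hlt] at hrev
  simpa [lastOcc] using hrev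

theorem firstOcc_lt_lastOcc {w : List ℕ} {v : ℕ} (h : 2 ≤ w.count v) :
    firstOcc w v < lastOcc w v := by
  obtain ⟨f, hf⟩ := List.sublist_iff_exists_fin_orderEmbedding_get_eq.1
    (List.replicate_sublist_iff.2 h)
  have hval (i : Fin (List.replicate 2 v).length) : w[(f i : ℕ)]? = some v := by
    have := hf i
    simp only [List.get_eq_getElem, List.getElem_replicate] at this
    simp [this]
  calc firstOcc w v ≤ f ⟨0, by simp⟩ := firstOcc_le (hval _)
    _ < f ⟨1, by simp⟩ := f.strictMono (by simp)
    _ ≤ lastOcc w v := le_lastOcc (hval _)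

def HasBlockPattern (w : List ℕ) (m n : ℕ) : Prop :=
  ∃ e ∈ ({id, List.reverse} : Set (List ℕ → List ℕ)), Contains w (e (repPat m n))

def HasDoublePattern (w : List ℕ) (n : ℕ) : Prop :=
  ∃ e₁ ∈ ({id, List.reverse} : Set (List ℕ → List ℕ)),
    ∃ e₂ ∈ ({id, List.reverse} : Set (List ℕ → List ℕ)),
      Contains w (e₁ (List.range (n + 1)) ++ e₂ (List.range (n + 1)))

namespace Fin

def IsIdOrRev {m : ℕ} (e : Fin m → Fin m) : Prop := e = id ∨ e = Fin.rev

theorem exists_isIdOrRev_strictMono_comp {α : Type*} [Preorder α] {m : ℕ} {f : Fin m → α}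
    (hf : StrictMono f ∨ StrictAnti f) : ∃ e, IsIdOrRev e ∧ StrictMono (f ∘ e) := by
  rcases hf with hf | hf
  · exact ⟨id, Or.inl rfl, hf⟩
  · exact ⟨Fin.rev, Or.inr rfl, hf.comp Fin.rev_strictAnti⟩

namespace IsIdOrRev

variable {m : ℕ} {e e' : Fin m → Fin m}

theorem comp_self (he : IsIdOrRev e) : e ∘ e = id := by
  rcases he with rfl | rfl
  · rfl
  · exact funext Fin.rev_rev

theorem comp (he : IsIdOrRev e) (he' : IsIdOrRev e') : IsIdOrRev (e ∘ e') := by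
  rcases he with rfl | rfl
  · exact he'
  · rcases he' with rfl | rfl
    · exact Or.inr rfl
    · exact Or.inl (comp_self (Or.inr rfl))

theorem surjective (he : IsIdOrRev e) : Function.Surjective e := by
  rcases he with rfl | rfl
  exacts [Function.surjective_id, Fin.rev_surjective]

theorem exists_ofFn_val (he : IsIdOrRev e) :
    ∃ f ∈ ({id, List.reverse} : Set (List ℕ → List ℕ)),
      List.ofFn (fun i => (e i : ℕ)) = f (List.range m) := by
  rcases he with rfl | rfl
  · exact ⟨id, Or.inl rfl, by simp [List.ofFn_eq_map]⟩
  · refine ⟨List.reverse, Or.inr rfl, List.ext_getElem (by simp) fun i h₁ h₂ => ?_⟩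
    simp only [List.length_ofFn] at h₁
    simp [Fin.rev]
    omega

end IsIdOrRev

end Fin

theorem contains_ofFn_append_ofFn {w : List ℕ} {t : ℕ} {z : Fin t → ℕ} (hz : StrictMono z)
    (hmem : ∀ i, z i ∈ w) {σ τ : Fin t → Fin t} (hσ : Function.Surjective σ)
    (hfirst : StrictMono fun i => firstOcc w (z (σ i)))
    (hlast : StrictMono fun i => lastOcc w (z (τ i)))
    (hcross : ∀ i j, firstOcc w (z (σ i)) < lastOcc w (z (τ j))) :
    Contains w (List.ofFn (fun i => (σ i : ℕ)) ++ List.ofFn (fun i => (τ i : ℕ))) := by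
  refine ⟨(List.ofFn σ ++ List.ofFn τ).map z, ?_, ?_⟩
  · rw [List.map_append, List.map_ofFn, List.map_ofFn]
    exact List.ofFn_append_ofFn_sublist _ _ hfirst hlast hcross
      (fun i => getElem?_firstOcc (hmem _)) (fun j => getElem?_lastOcc (hmem _))
  · rw [stdz_map_of_strictMono hz fun j => List.mem_append_left _ (List.mem_ofFn.2 (hσ j)),
      List.map_append, List.map_ofFn, List.map_ofFn]
    rfl

theorem hasDoublePattern_of_firstOcc_lt_lastOcc {w : List ℕ} {n : ℕ} {y : Fin (n + 1) → ℕ}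
    (hy : StrictMono y ∨ StrictAnti y) (hmem : ∀ i, y i ∈ w)
    (hfirst : StrictMono (firstOcc w ∘ y) ∨ StrictAnti (firstOcc w ∘ y))
    (hlast : StrictMono (lastOcc w ∘ y) ∨ StrictAnti (lastOcc w ∘ y))
    (hcross : ∀ i j, firstOcc w (y i) < lastOcc w (y j)) : HasDoublePattern w n := by
  obtain ⟨e, he, hz⟩ := Fin.exists_isIdOrRev_strictMono_comp hy
  obtain ⟨e₁, he₁, hf⟩ := Fin.exists_isIdOrRev_strictMono_comp hfirst
  obtain ⟨e₂, he₂, hl⟩ := Fin.exists_isIdOrRev_strictMono_comp hlast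
  have hcancel (e' : Fin (n + 1) → Fin (n + 1)) (i) : y (e (e (e' i))) = y (e' i) := by
    rw [← Function.comp_apply (f := e), he.comp_self, id]
  obtain ⟨f₁, hf₁, h₁⟩ := (he.comp he₁).exists_ofFn_val
  obtain ⟨f₂, hf₂, h₂⟩ := (he.comp he₂).exists_ofFn_val
  refine ⟨f₁, hf₁, f₂, hf₂, ?_⟩
  rw [← h₁, ← h₂]
  refine contains_ofFn_append_ofFn hz (fun i => hmem _) (he.comp he₁).surjective ?_ ?_ ?_
  · simpa only [Function.comp_def, hcancel] using hf
  · simpa only [Function.comp_def, hcancel] using hl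
  · simpa only [Function.comp_apply, hcancel] using fun i j => hcross (e₁ i) (e₂ j)

theorem count_flatMap_replicate_finRange (t m : ℕ) (i : Fin t) :
    ((List.finRange t).flatMap (List.replicate m)).count i = m := by
  rw [List.count_flatMap, ← List.ofFn_eq_map, List.sum_ofFn]
  simp [List.count_replicate]

theorem contains_repPat {w : List ℕ} {k n : ℕ} {z : Fin (n + 1) → ℕ} (hz : StrictMono z)
    (hcount : ∀ i, w.count (z i) = k + 1)
    (hchain : ∀ i j, i < j → lastOcc w (z i) < firstOcc w (z j)) :
    Contains w (repPat (k + 1) n) := by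
  set l := (List.finRange (n + 1)).flatMap (List.replicate (k + 1))
  set u := w.filter (· ∈ List.ofFn z)
  have hperm : u.Perm (l.map z) := by
    refine List.perm_iff_count.2 fun x => ?_
    by_cases hx : x ∈ List.ofFn z
    · obtain ⟨i, rfl⟩ := List.mem_ofFn.1 hx
      rw [List.count_filter (by simpa using hx), hcount,
        List.count_map_of_injective _ _ hz.injective, count_flatMap_replicate_finRange]
    · rw [List.count_eq_zero_of_not_mem, List.count_eq_zero_of_not_mem]
      · simp only [List.mem_map, not_exists, not_and]
        exact fun i _ hi => hx (List.mem_ofFn.2 ⟨i, hi⟩)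
      · simp only [u, List.mem_filter, decide_eq_true_eq]
        exact fun h => hx h.2
  have hu : u.Pairwise (· ≤ ·) := by
    refine List.pairwise_filter.2 (List.pairwise_iff_getElem.2 fun a b ha hb hab hxa hxb => ?_)
    obtain ⟨i, hi⟩ := List.mem_ofFn.1 (of_decide_eq_true hxa)
    obtain ⟨j, hj⟩ := List.mem_ofFn.1 (of_decide_eq_true hxb)
    rw [← hi, ← hj]
    refine hz.monotone (not_lt.1 fun hji => ?_)
    have h1 := le_lastOcc (w := w) (i := b) (v := z j) (by rw [List.getElem?_eq_getElem hb, hj])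
    have h2 := firstOcc_le (w := w) (i := a) (v := z i) (by rw [List.getElem?_eq_getElem ha, hi])
    have := hchain j i hji
    omega
  have hl : l.Pairwise (· ≤ ·) := by
    refine List.pairwise_flatMap.2 ⟨fun i _ => List.pairwise_replicate.2 (Or.inr le_rfl), ?_⟩
    refine (List.pairwise_lt_finRange _).imp fun hij x hx y hy => ?_
    rw [List.eq_of_mem_replicate hx, List.eq_of_mem_replicate hy]
    exact hij.le
  refine ⟨u, List.filter_sublist, ?_⟩
  rw [List.Perm.eq_of_sortedLE hu.sortedLE ((hl.map z hz.monotone).sortedLE) hperm,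
    stdz_map_of_strictMono hz fun i => List.mem_flatMap.2 ⟨i, List.mem_finRange i, by simp⟩]
  simp [repPat, List.map_flatMap, ← List.map_coe_finRange_eq_range, List.flatMap_map]

theorem hasBlockPattern_of_lastOcc_lt_firstOcc {w : List ℕ} {k n : ℕ} {z : Fin (n + 1) → ℕ}
    (hz : StrictMono z ∨ StrictAnti z) (hcount : ∀ i, w.count (z i) = k + 1)
    (hchain : ∀ i j, i < j → lastOcc w (z i) < firstOcc w (z j)) : HasBlockPattern w (k + 1) n := by
  rcases hz with hz | hz
  · exact ⟨id, Or.inl rfl, contains_repPat hz hcount hchain⟩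
  have hmem (i) : z i ∈ w := List.count_pos_iff.1 (by rw [hcount]; omega)
  have hrev : Contains w.reverse (repPat (k + 1) n) := by
    refine contains_repPat (hz.comp Fin.rev_strictAnti) (fun i => by simp [hcount])
      fun i j hij => ?_
    have := hchain j.rev i.rev (Fin.rev_lt_rev.2 hij)
    have := firstOcc_lt_length (hmem i.rev)
    simp only [Function.comp_apply, lastOcc_reverse, firstOcc_reverse (hmem _)]
    omega
  exact ⟨List.reverse, Or.inr rfl, by simpa using hrev.reverse⟩

theorem exists_overlapping_or_separated {n : ℕ} {a b : Fin (n ^ 2 + 1) → ℕ} (ha : StrictMono a)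
    (hb : StrictMono b) (hab : ∀ i, a i < b i) (hne : ∀ i j, i ≠ j → a i ≠ b j) :
    (∃ e : Fin (n + 1) → Fin (n ^ 2 + 1), StrictMono e ∧ ∀ i j, a (e i) < b (e j)) ∨
      ∃ e : Fin (n + 1) → Fin (n ^ 2 + 1), StrictMono e ∧ ∀ i j, i < j → b (e i) < a (e j) := by
  by_cases hwin : ∃ P : ℕ, ∃ hP : P + n < n ^ 2 + 1, a ⟨P + n, hP⟩ < b ⟨P, by omega⟩
  · obtain ⟨P, hP, hlt⟩ := hwin
    refine Or.inl ⟨fun i => ⟨P + i, by omega⟩, fun i j hij => by simpa using hij, fun i j => ?_⟩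
    calc a ⟨P + i, _⟩ ≤ a ⟨P + n, hP⟩ := ha.monotone (by simp [Fin.le_def]; omega)
      _ < b ⟨P, _⟩ := hlt
      _ ≤ b ⟨P + j, _⟩ := hb.monotone (by simp [Fin.le_def])
  push Not at hwin
  have hn : 0 < n := Nat.pos_of_ne_zero fun hn => by
    subst hn
    exact (hwin 0 (by simp)).not_gt (hab 0)
  have hidx (i : Fin (n + 1)) : (i : ℕ) * n ≤ n ^ 2 := by
    rw [sq]; exact Nat.mul_le_mul_right _ (Nat.lt_succ_iff.1 i.isLt)
  refine Or.inr ⟨fun i => ⟨i * n, by have := hidx i; omega⟩,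
    fun i j hij => Fin.mk_lt_mk.2 (Nat.mul_lt_mul_of_pos_right hij hn), fun i j hij => ?_⟩
  have hij' : (i : ℕ) * n + n ≤ j * n := by
    rw [← Nat.succ_mul]; exact Nat.mul_le_mul_right _ hij
  have hj := hidx j
  have hne' := hne ⟨i * n + n, by omega⟩ ⟨i * n, by omega⟩ (by simp [Fin.ext_iff]; omega)
  calc b ⟨i * n, _⟩ < a ⟨i * n + n, _⟩ := lt_of_le_of_ne (hwin (i * n) (by omega)) hne'.symm
    _ ≤ a ⟨j * n, _⟩ := ha.monotone (Fin.mk_le_mk.2 hij')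

theorem hasBlockPattern_or_hasDoublePattern_of_strictMono_firstOcc {w : List ℕ} {k n : ℕ}
    (hk : 1 ≤ k) {x : Fin (n ^ 3 + 1) → ℕ} (hx : StrictMono x ∨ StrictAnti x)
    (hcount : ∀ i, w.count (x i) = k + 1) (hfirst : StrictMono (firstOcc w ∘ x)) :
    HasBlockPattern w (k + 1) n ∨ HasDoublePattern w n := by
  have hmem (i) : x i ∈ w := List.count_pos_iff.1 (by rw [hcount]; omega)
  have hspan (i) : firstOcc w (x i) < lastOcc w (x i) := firstOcc_lt_lastOcc (by rw [hcount]; omega)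
  have hxinj : Function.Injective x := hx.elim StrictMono.injective StrictAnti.injective
  have hlast_inj : Function.Injective (lastOcc w ∘ x) := by
    intro i j hij
    apply hxinj
    rw [← Option.some_inj, ← getElem?_lastOcc (hmem i), ← getElem?_lastOcc (hmem j)]
    exact congrArg (w[·]?) hij
  rcases erdos_szekeres_strictMono_comp hlast_inj (r := n ^ 2) (s := n)
    (by rw [← pow_succ]; exact Nat.lt_succ_self _) with ⟨g, hg, hlast⟩ | ⟨g, hg, hlast⟩
  · have hne (i j) (hij : i ≠ j) : firstOcc w (x (g i)) ≠ lastOcc w (x (g j)) := fun h =>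
      hij <| hg.injective <| hxinj <| Option.some_inj.1 <| by
        rw [← getElem?_firstOcc (hmem _), h, getElem?_lastOcc (hmem _)]
    rcases exists_overlapping_or_separated (hfirst.comp hg) hlast (fun i => hspan _) hne with
      ⟨e, he, hcross⟩ | ⟨e, he, hsep⟩
    · exact Or.inr <| hasDoublePattern_of_firstOcc_lt_lastOcc
        (hx.imp (·.comp (hg.comp he)) (·.comp_strictMono (hg.comp he))) (fun _ => hmem _)
        (Or.inl ((hfirst.comp hg).comp he)) (Or.inl (hlast.comp he)) hcross
    · exact Or.inl <| hasBlockPattern_of_lastOcc_lt_firstOcc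
        (hx.imp (·.comp (hg.comp he)) (·.comp_strictMono (hg.comp he))) (fun _ => hcount _) hsep
  · refine Or.inr <| hasDoublePattern_of_firstOcc_lt_lastOcc
      (hx.symm.imp (·.comp hg) (·.comp_strictAnti hg)) (fun _ => hmem _)
      (Or.inr (hfirst.comp_strictAnti hg)) (Or.inl hlast) fun i j => ?_
    calc firstOcc w (x (g i)) ≤ firstOcc w (x (g 0)) :=
          (hfirst.comp_strictAnti hg).antitone (Fin.zero_le i)
      _ < lastOcc w (x (g 0)) := hspan _
      _ ≤ lastOcc w (x (g j)) := hlast.monotone (Fin.zero_le j)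

theorem stmt_16_general (k n : ℕ) (hk : 1 ≤ k) (w : List ℕ)
    (hcount : ∀ v ∈ Finset.Icc 1 (n ^ 6 + 1), w.count v = k + 1) :
    (∃ e ∈ ({id, List.reverse} : Set (List ℕ → List ℕ)),
      Contains w (e (repPat (k + 1) n))) ∨
    (∃ e₁ ∈ ({id, List.reverse} : Set (List ℕ → List ℕ)),
      ∃ e₂ ∈ ({id, List.reverse} : Set (List ℕ → List ℕ)),
        Contains w (e₁ (List.range (n + 1)) ++ e₂ (List.range (n + 1)))) := by
  have hcount' (i : Fin (n ^ 6 + 1)) : w.count ((i : ℕ) + 1) = k + 1 :=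
    hcount _ (Finset.mem_Icc.2 ⟨by omega, by omega⟩)
  have hmem (i : Fin (n ^ 6 + 1)) : (i : ℕ) + 1 ∈ w :=
    List.count_pos_iff.1 (by rw [hcount']; omega)
  have hfirst_inj : Function.Injective fun i : Fin (n ^ 6 + 1) => firstOcc w (i + 1) :=
    fun i j hij => by simpa [Fin.ext_iff] using (List.idxOf_inj (hmem i)).1 hij
  rcases erdos_szekeres_strictMono_comp hfirst_inj (r := n ^ 3) (s := n ^ 3)
    (by rw [← pow_add]; exact Nat.lt_succ_self _) with ⟨g, hg, hfirst⟩ | ⟨g, hg, hfirst⟩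
  · exact hasBlockPattern_or_hasDoublePattern_of_strictMono_firstOcc hk
      (x := fun i => g i + 1) (Or.inl fun i j hij => by simpa using hg hij) (fun _ => hcount' _)
      hfirst
  · exact hasBlockPattern_or_hasDoublePattern_of_strictMono_firstOcc hk
      (x := fun i => g i + 1) (Or.inr fun i j hij => by simpa using hg hij) (fun _ => hcount' _)
      hfirst

theorem stmt_16 (k n : ℕ) (hk : 1 ≤ k) (w : List ℕ)
    (hcount : ∀ v ∈ Finset.Icc 1 (n ^ 6 + 1), w.count v = k + 1)
    (hmem : ∀ x ∈ w, x ∈ Finset.Icc 1 (n ^ 6 + 1)) :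
    (∃ e ∈ ({id, List.reverse} : Set (List ℕ → List ℕ)),
      Contains w (e (repPat (k + 1) n))) ∨
    (∃ e₁ ∈ ({id, List.reverse} : Set (List ℕ → List ℕ)),
      ∃ e₂ ∈ ({id, List.reverse} : Set (List ℕ → List ℕ)),
        Contains w (e₁ (List.range (n + 1)) ++ e₂ (List.range (n + 1)))) :=
  stmt_16_general k n hk w hcount
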